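/- Let u : ℝ^N → ℝ be continuously differentiable and suppose there exist positive constants C₁, C₂ such that the gradient estimate |∇u(x)| ≤ C₁ · exp( C₂ · (sup_{y ∈ B(x,R)} u(y) − u(x)) / R ) holds for every x ∈ ℝ^N and every R > 0. Suppose moreover there exists a constant K > 0 such that sup_{B(0,j)} u ≤ K·j for every integer j ≥ 1, and that u(0) = 0. Then ∇u is bounded on ℝ^N, i.e., sup_{x ∈ ℝ^N} |∇u(x)| < ∞. -/

import Mathlib

open scoped BigOperators

theorem gradient_bounded_of_gradient_estimate_and_linear_growth
    {N : ℕ} (u : EuclideanSpace ℝ (Fin N) → ℝ) (hu : ContDiff ℝ 1 u)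
    (C₁ C₂ : ℝ) (hC₁ : 0 < C₁) (hC₂ : 0 < C₂)
    (hgrad : ∀ x : EuclideanSpace ℝ (Fin N), ∀ R : ℝ, 0 < R →
      ‖gradient u x‖ ≤ C₁ * Real.exp (C₂ * ((sSup (u '' Metric.ball x R) - u x) / R)))
    (K : ℝ) (hK : 0 < K)
    (hlin : ∀ j : ℕ, 1 ≤ j → sSup (u '' Metric.ball 0 (j : ℝ)) ≤ K * j)
    (h0 : u 0 = 0) :
    ∃ M : ℝ, ∀ x : EuclideanSpace ℝ (Fin N), ‖gradient u x‖ ≤ M := by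
  refine ⟨C₁ * Real.exp (C₂ * (K + 1)), fun x => ?_⟩
  set R : ℝ := max 1 (K * (‖x‖ + 1) - u x) with hR
  have hR1 : (1 : ℝ) ≤ R := le_max_left _ _
  have hRpos : 0 < R := lt_of_lt_of_le one_pos hR1
  have hR2 : K * (‖x‖ + 1) - u x ≤ R := le_max_right _ _
  set j : ℕ := ⌈‖x‖ + R⌉₊ with hj
  have hj1 : 1 ≤ j := by
    rw [hj, Nat.one_le_ceil_iff]
    positivity
  have hjle : (j : ℝ) ≤ ‖x‖ + R + 1 := by
    exact le_of_lt (Nat.ceil_lt_add_one (by positivity))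
  have hsub : Metric.ball x R ⊆ Metric.ball (0 : EuclideanSpace ℝ (Fin N)) (j : ℝ) := by
    intro y hy
    simp only [Metric.mem_ball, dist_zero_right] at *
    have hxj : ‖x‖ + R ≤ (j : ℝ) := Nat.le_ceil _
    calc ‖y‖ ≤ ‖y - x‖ + ‖x‖ := by
          have := norm_add_le (y - x) x; simpa using this
      _ < R + ‖x‖ := by
          have : dist y x = ‖y - x‖ := by rw [dist_eq_norm]
          linarith [this ▸ hy]
      _ ≤ (j : ℝ) := by linarith
  have hbdd : BddAbove (u '' Metric.ball (0 : EuclideanSpace ℝ (Fin N)) (j : ℝ)) := by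
    have hc : IsCompact (Metric.closedBall (0 : EuclideanSpace ℝ (Fin N)) (j : ℝ)) :=
      isCompact_closedBall _ _
    have := hc.bddAbove_image (hu.continuous.continuousOn)
    exact this.mono (Set.image_mono Metric.ball_subset_closedBall)
  have hne : (u '' Metric.ball x R).Nonempty :=
    ⟨u x, Set.mem_image_of_mem _ (Metric.mem_ball_self hRpos)⟩
  have hsup : sSup (u '' Metric.ball x R) ≤ K * j := by
    refine le_trans (csSup_le_csSup hbdd hne (Set.image_mono hsub)) (hlin j hj1)
  have hexp : (sSup (u '' Metric.ball x R) - u x) / R ≤ K + 1 := by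
    have h1 : sSup (u '' Metric.ball x R) - u x ≤ K * (‖x‖ + R + 1) - u x := by
      have : K * (j : ℝ) ≤ K * (‖x‖ + R + 1) := by
        exact mul_le_mul_of_nonneg_left hjle (le_of_lt hK)
      linarith
    have h2 : K * (‖x‖ + R + 1) - u x = K * R + (K * (‖x‖ + 1) - u x) := by ring
    have h3 : sSup (u '' Metric.ball x R) - u x ≤ K * R + R := by
      rw [h2] at h1; linarith
    rw [div_le_iff₀ hRpos]
    nlinarith
  calc ‖gradient u x‖ ≤ C₁ * Real.exp (C₂ * ((sSup (u '' Metric.ball x R) - u x) / R)) :=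
        hgrad x R hRpos
    _ ≤ C₁ * Real.exp (C₂ * (K + 1)) := by
        apply mul_le_mul_of_nonneg_left _ (le_of_lt hC₁)
        exact Real.exp_le_exp.mpr (mul_le_mul_of_nonneg_left hexp (le_of_lt hC₂))
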